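/- arXiv:2203.02374 — 9 statements merged into one kernel-verified Lean document; each statement's English description precedes it below -/
import Mathlib

section
/- Let K' be a field with a valuation v' taking values in a linearly ordered commutative group with zero, with valuation ring O' = {x : v'(x) ≤ 1}. Let K ⊆ K' be a subfield and k ⊆ K a subfield with k ⊆ O', such that k lifts the residue field of K, i.e. for every u ∈ K with v'(u) = 1 there exists α ∈ k with v'(u − α) < 1. Let k' ⊆ K' be a subfield with k ⊆ k' ⊆ O'. Suppose a₁, …, aₙ ∈ K are k-linearly independent over O' ∩ K, meaning: whenever c₁, …, cₙ ∈ k and c₁a₁ + ⋯ + cₙaₙ ∈ O', all cᵢ = 0. Then a₁, …, aₙ are k'-linearly independent over O', i.e. whenever β₁', …, βₙ' ∈ k' and β₁'a₁ + ⋯ + βₙ'aₙ ∈ O', all βᵢ' = 0. -/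
/-!
Induct on `n`. Pick `aⱼ` of largest valuation `M`; independence forces `M > 1`. Since residues of
`K` lift to `k`, every other `aᵢ` can be corrected to `bᵢ = aᵢ - αᵢ aⱼ` with `αᵢ ∈ k` and
`v'(bᵢ) < M`, and the family `b` is again `k`-independent modulo `O'`. Rewrite
`∑ βᵢ aᵢ = ∑ βᵢ bᵢ + γ aⱼ` with `γ ∈ k'`: both `∑ βᵢ bᵢ` and the total sum have valuation `< M`,
so `v'(γ) < 1`, and a nonzero element of a subfield inside `O'` is a unit of `O'`, whence
`γ = 0`. The induction hypothesis applied to `b` finishes the argument.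
-/

open Finset

theorem Fin.sum_mul_eq_sum_succAbove_mul_sub_add_mul {R : Type*} [CommRing R] {n : ℕ}
    (β a : Fin (n + 1) → R) (j : Fin (n + 1)) (α : Fin n → R) :
    ∑ i, β i * a i = ∑ i, β (j.succAbove i) * (a (j.succAbove i) - α i * a j)
      + (β j + ∑ i, β (j.succAbove i) * α i) * a j := by
  rw [Fin.sum_univ_succAbove _ j]
  simp only [mul_sub, add_mul, sum_sub_distrib, ← mul_assoc, ← sum_mul]
  ring

namespace Valuation

variable {F : Type*} [Field F] {Γ₀ : Type*} [LinearOrderedCommGroupWithZero Γ₀]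
  (v : Valuation F Γ₀)

/-- `a` is `k`-linearly independent modulo the valuation ring: no nontrivial `k`-combination
of the `a i` is integral. -/
def LinearIndepModInteger {ι : Type*} [Fintype ι] (k : Subfield F) (a : ι → F) : Prop :=
  ∀ c : ι → F, (∀ i, c i ∈ k) → v (∑ i, c i * a i) ≤ 1 → ∀ i, c i = 0

variable {v}

theorem eq_zero_of_mem_of_lt_one {k : Subfield F} (hk : ∀ x ∈ k, v x ≤ 1) {x : F}
    (hx : x ∈ k) (hlt : v x < 1) : x = 0 := by
  by_contra hx0
  exact ((v.val_lt_one_iff hx0).mp hlt).not_ge (hk _ (k.inv_mem hx))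

theorem LinearIndepModInteger.one_lt {ι : Type*} [Fintype ι] {k : Subfield F}
    {a : ι → F} (h : v.LinearIndepModInteger k a) (i : ι) : 1 < v (a i) := by
  classical
  by_contra! hle
  have hsingle : ∀ j, (Pi.single i (1 : F) : ι → F) j ∈ k := fun j => by
    by_cases hj : j = i <;> simp [hj]
  have := h (Pi.single i (1 : F)) hsingle (by simpa [Pi.single_apply] using hle) i
  simp at this

theorem exists_mem_sub_mul_lt {K k : Subfield F}
    (hlift : ∀ u ∈ K, v u = 1 → ∃ α ∈ k, v (u - α) < 1)
    {u w : F} (hu : u ∈ K) (hw : w ∈ K) (hw0 : w ≠ 0) (huw : v u ≤ v w) :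
    ∃ α ∈ k, v (u - α * w) < v w := by
  rcases huw.lt_or_eq with hlt | heq
  · exact ⟨0, k.zero_mem, by simpa using hlt⟩
  obtain ⟨α, hαk, hα⟩ := hlift (u / w) (K.div_mem hu hw) (by
    rw [map_div₀, heq, div_self ((v.ne_zero_iff).mpr hw0)])
  refine ⟨α, hαk, ?_⟩
  have hvw : 0 < v w := (v.pos_iff).mpr hw0
  calc v (u - α * w) = v (u / w - α) * v w := by
        rw [← map_mul, sub_mul, div_mul_cancel₀ _ hw0]
    _ < 1 * v w := mul_lt_mul_of_pos_right hα hvw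
    _ = v w := one_mul _

theorem eq_zero_of_add_mul_lt {k : Subfield F} (hk : ∀ x ∈ k, v x ≤ 1) {x γ w : F}
    (hγ : γ ∈ k) (hx : v x < v w) (hsum : v (x + γ * w) < v w) : γ = 0 := by
  have hγw : v (γ * w) < v w := by simpa using v.map_sub_lt hsum hx
  rw [map_mul] at hγw
  exact eq_zero_of_mem_of_lt_one hk hγ (lt_of_mul_lt_mul_right' (by simpa using hγw))

theorem LinearIndepModInteger.succAbove_sub_mul {n : ℕ} {k : Subfield F} {a : Fin (n + 1) → F}
    (h : v.LinearIndepModInteger k a) (j : Fin (n + 1)) {α : Fin n → F} (hα : ∀ i, α i ∈ k) :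
    v.LinearIndepModInteger k (fun i => a (j.succAbove i) - α i * a j) := by
  intro c hc hv i
  -- the coefficient of `a j` is chosen to cancel the corrections `α`
  let c' : Fin (n + 1) → F := j.insertNth (α := fun _ => F) (-∑ i, c i * α i) c
  have hc' : ∀ i, c' i ∈ k := j.forall_iff_succAbove.mpr
    ⟨by simpa [c'] using k.neg_mem (k.sum_mem fun i _ => k.mul_mem (hc i) (hα i)),
      by simpa [c'] using hc⟩
  have hsum : ∑ i, c' i * a i = ∑ i, c i * (a (j.succAbove i) - α i * a j) := by
    simp [Fin.sum_mul_eq_sum_succAbove_mul_sub_add_mul c' a j α, c']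
  simpa [c'] using h c' hc' (hsum ▸ hv) (j.succAbove i)

theorem LinearIndepModInteger.extend_scalars {K k k' : Subfield F} (hkK : k ≤ K)
    (hlift : ∀ u ∈ K, v u = 1 → ∃ α ∈ k, v (u - α) < 1) (hkk' : k ≤ k')
    (hk'O : ∀ x ∈ k', v x ≤ 1) :
    ∀ {n : ℕ} {a : Fin n → F}, (∀ i, a i ∈ K) → v.LinearIndepModInteger k a →
      v.LinearIndepModInteger k' a
  | 0, _, _, _ => fun _ _ _ i => i.elim0
  | n + 1, a, ha, h => by
    obtain ⟨j, hj⟩ := Finite.exists_max fun i => v (a i)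
    have hM : 1 < v (a j) := h.one_lt j
    have haj : a j ≠ 0 := by rintro h0; simp [h0] at hM
    choose α hαk hαlt using fun i =>
      exists_mem_sub_mul_lt hlift (ha (j.succAbove i)) (ha j) haj (hj _)
    have hb : v.LinearIndepModInteger k' (fun i => a (j.succAbove i) - α i * a j) :=
      extend_scalars hkK hlift hkk' hk'O
        (fun i => K.sub_mem (ha _) (K.mul_mem (hkK (hαk i)) (ha j)))
        (h.succAbove_sub_mul j hαk)
    intro β hβ hsum
    rw [Fin.sum_mul_eq_sum_succAbove_mul_sub_add_mul β a j α] at hsum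
    have hrest : v (∑ i, β (j.succAbove i) * (a (j.succAbove i) - α i * a j)) < v (a j) :=
      v.map_sum_lt (zero_lt_one.trans hM).ne' fun i _ => by
        rw [map_mul]
        exact (mul_le_of_le_one_left' (hk'O _ (hβ _))).trans_lt (hαlt i)
    have hγ : β j + ∑ i, β (j.succAbove i) * α i = 0 :=
      eq_zero_of_add_mul_lt hk'O
        (k'.add_mem (hβ j) (k'.sum_mem fun i _ => k'.mul_mem (hβ _) (hkk' (hαk i))))
        hrest (hsum.trans_lt hM)
    rw [hγ, zero_mul, add_zero] at hsum
    have hz := hb _ (fun i => hβ _) hsum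
    exact j.forall_iff_succAbove.mpr ⟨by simpa [hz] using hγ, hz⟩

end Valuation

theorem stmt_1_general {K' : Type*} [Field K'] {Γ₀ : Type*} [LinearOrderedCommGroupWithZero Γ₀]
    (v' : Valuation K' Γ₀) (K k k' : Subfield K')
    (hkK : k ≤ K)
    (hlift : ∀ u ∈ K, v' u = 1 → ∃ α ∈ k, v' (u - α) < 1)
    (hkk' : k ≤ k') (hk'O : ∀ x ∈ k', v' x ≤ 1)
    (n : ℕ) (a : Fin n → K') (ha : ∀ i, a i ∈ K)
    (hindep : ∀ c : Fin n → K', (∀ i, c i ∈ k) → v' (∑ i, c i * a i) ≤ 1 → ∀ i, c i = 0) :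
    ∀ β : Fin n → K', (∀ i, β i ∈ k') → v' (∑ i, β i * a i) ≤ 1 → ∀ i, β i = 0 :=
  Valuation.LinearIndepModInteger.extend_scalars hkK hlift hkk' hk'O ha hindep

/-- if a₁,…,aₙ ∈ K are k-linearly independent over O' ∩ K, then they are
    k'-linearly independent over O'. -/
theorem stmt_1 {K' : Type*} [Field K'] {Γ₀ : Type*} [LinearOrderedCommGroupWithZero Γ₀]
    (v' : Valuation K' Γ₀) (K k k' : Subfield K')
    (hkK : k ≤ K) (hkO : ∀ x ∈ k, v' x ≤ 1)
    (hlift : ∀ u ∈ K, v' u = 1 → ∃ α ∈ k, v' (u - α) < 1)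
    (hkk' : k ≤ k') (hk'O : ∀ x ∈ k', v' x ≤ 1)
    (n : ℕ) (a : Fin n → K') (ha : ∀ i, a i ∈ K)
    (hindep : ∀ c : Fin n → K', (∀ i, c i ∈ k) → v' (∑ i, c i * a i) ≤ 1 → ∀ i, c i = 0) :
    ∀ β : Fin n → K', (∀ i, β i ∈ k') → v' (∑ i, β i * a i) ≤ 1 → ∀ i, β i = 0 :=
  stmt_1_general v' K k k' hkK hlift hkk' hk'O n a ha hindep
end

section
/- Let K' be a field with a valuation v' taking values in a linearly ordered commutative group with zero, with valuation ring O' = {x : v'(x) ≤ 1}. Let K ⊆ K' be a subfield and k ⊆ K a subfield with k ⊆ O', such that k lifts the residue field of K, i.e. for every u ∈ K with v'(u) = 1 there exists α ∈ k with v'(u − α) < 1. Let k' ⊆ K' be a subfield with k ⊆ k' ⊆ O'. Then the intersection of O' with the k'-linear span of K inside K' equals the k'-linear span of O' ∩ K inside K', i.e. O' ∩ span_{k'}(K) = span_{k'}(O' ∩ K) as k'-submodules of K'. -/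
open Finset

/-- Key lemma: any k'-linear combination of elements of K with valuation ≤ 1
lies in the k'-span of O' ∩ K. -/
lemma stmt_2_key {K' : Type*} [Field K'] {Γ₀ : Type*} [LinearOrderedCommGroupWithZero Γ₀]
    (v' : Valuation K' Γ₀) (K k k' : Subfield K')
    (hkK : k ≤ K)
    (hlift : ∀ u ∈ K, v' u = 1 → ∃ α ∈ k, v' (u - α) < 1)
    (hkk' : k ≤ k') (hk'O : ∀ x ∈ k', v' x ≤ 1)
    {ι : Type*} [DecidableEq ι] :
    ∀ n : ℕ, ∀ (s : Finset ι) (c u : ι → K'), s.card = n →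
      (∀ i ∈ s, c i ∈ k') → (∀ i ∈ s, u i ∈ K) →
      v' (∑ i ∈ s, c i * u i) ≤ 1 →
      (∑ i ∈ s, c i * u i) ∈ Submodule.span k' ({x : K' | v' x ≤ 1} ∩ (K : Set K')) := by
  have hval1 : ∀ x ∈ k', x ≠ 0 → v' x = 1 := by
    intro x hx hx0
    refine le_antisymm (hk'O x hx) ?_
    have hinv : v' x⁻¹ ≤ 1 := hk'O x⁻¹ (k'.inv_mem hx)
    calc (1 : Γ₀) = v' x * v' x⁻¹ := by
          rw [← Valuation.map_mul, mul_inv_cancel₀ hx0, Valuation.map_one]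
      _ ≤ v' x * 1 := mul_le_mul_right hinv _
      _ = v' x := mul_one _
  intro n
  induction n with
  | zero =>
    intro s c u hcard _ _ _
    rw [Finset.card_eq_zero.mp hcard]
    simp
  | succ n IH =>
    intro s c u hcard hc hu hle
    by_cases hall : ∀ i ∈ s, v' (u i) ≤ 1
    · -- all u i in O' ∩ K : direct
      apply Submodule.sum_mem
      intro i hi
      have hm : u i ∈ Submodule.span k' ({x : K' | v' x ≤ 1} ∩ (K : Set K')) :=
        Submodule.subset_span ⟨hall i hi, hu i hi⟩
      have : c i * u i = (⟨c i, hc i hi⟩ : k') • u i := rfl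
      rw [this]
      exact Submodule.smul_mem _ _ hm
    · push_neg at hall
      obtain ⟨i₀, hi₀s, hi₀⟩ := hall
      have hsne : s.Nonempty := ⟨i₀, hi₀s⟩
      obtain ⟨j, hj, hmax⟩ := Finset.exists_max_image s (fun i => v' (u i)) hsne
      set γ := v' (u j) with hγ
      have hγ1 : 1 < γ := lt_of_lt_of_le hi₀ (hmax i₀ hi₀s)
      have hγ0 : γ ≠ 0 := ne_of_gt (lt_trans zero_lt_one hγ1)
      have huj0 : u j ≠ 0 := fun h => hγ0 (by rw [hγ, h, map_zero])
      -- choose the lifts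
      have hα : ∀ i ∈ s, ∃ a : K', a ∈ k ∧ v' (u i - a * u j) < γ := by
        intro i hi
        by_cases h1 : v' (u i / u j) = 1
        · obtain ⟨a, hak, ha⟩ := hlift _ (K.div_mem (hu i hi) (hu j hj)) h1
          refine ⟨a, hak, ?_⟩
          have he : u i - a * u j = (u i / u j - a) * u j := by field_simp
          rw [he, Valuation.map_mul, ← hγ]
          exact (mul_lt_iff_lt_one_left (zero_lt_iff.mpr hγ0)).mpr ha
        · refine ⟨0, k.zero_mem, ?_⟩
          have hle' : v' (u i) ≤ γ := hmax i hi
          have hne : v' (u i) ≠ γ := by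
            intro h
            exact h1 (by rw [map_div₀, h, div_self hγ0])
          simpa using lt_of_le_of_ne hle' hne
      classical
      set α : ι → K' := fun i => if hi : i ∈ s then (hα i hi).choose else 0 with hαdef
      have hαk : ∀ i ∈ s, α i ∈ k := by
        intro i hi; simp only [hαdef, dif_pos hi]; exact (hα i hi).choose_spec.1
      have hαv : ∀ i ∈ s, v' (u i - α i * u j) < γ := by
        intro i hi; simp only [hαdef, dif_pos hi]; exact (hα i hi).choose_spec.2
      have hαj0 : α j ≠ 0 := by
        intro h0
        have := hαv j hj
        rw [h0, zero_mul, sub_zero] at this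
        exact absurd this (lt_irrefl γ)
      -- the "leading coefficient" d is zero
      set d : K' := ∑ i ∈ s, c i * α i with hd
      have hdk' : d ∈ k' := sum_mem fun i hi =>
        k'.mul_mem (hc i hi) (hkk' (hαk i hi))
      have hd0 : d = 0 := by
        by_contra hd0
        have h2 : ∀ i ∈ s, v' (c i * (u i - α i * u j)) < γ := by
          intro i hi
          rw [Valuation.map_mul]
          calc v' (c i) * v' (u i - α i * u j)
              ≤ 1 * v' (u i - α i * u j) := mul_le_mul_left (hk'O _ (hc i hi)) _
            _ = v' (u i - α i * u j) := one_mul _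
            _ < γ := hαv i hi
        have h3 : v' (∑ i ∈ s, c i * (u i - α i * u j)) < γ :=
          Valuation.map_sum_lt v' hγ0 h2
        have h4 : ∑ i ∈ s, c i * (u i - α i * u j)
            = (∑ i ∈ s, c i * u i) - d * u j := by
          rw [hd, Finset.sum_mul]
          rw [← Finset.sum_sub_distrib]
          apply Finset.sum_congr rfl
          intro i _
          ring
        rw [h4] at h3
        have h5 : v' (d * u j) ≤ max (v' (∑ i ∈ s, c i * u i))
            (v' ((∑ i ∈ s, c i * u i) - d * u j)) := by
          have h5' := Valuation.map_sub v' (∑ i ∈ s, c i * u i)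
            ((∑ i ∈ s, c i * u i) - d * u j)
          have he : (∑ i ∈ s, c i * u i) - ((∑ i ∈ s, c i * u i) - d * u j) = d * u j := by
            ring
          rw [he] at h5'
          exact h5' 
        have h6 : v' (d * u j) < γ :=
          lt_of_le_of_lt h5 (max_lt (lt_of_le_of_lt hle hγ1) h3)
        have h7 : v' (d * u j) = γ := by
          rw [Valuation.map_mul, hval1 d hdk' hd0, one_mul]
        rw [h7] at h6
        exact absurd h6 (lt_irrefl γ)
      -- rewrite the sum with n terms, eliminating j
      have h2 : ∑ i ∈ s.erase j, c i * α i = -(c j * α j) := by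
        have := Finset.sum_erase_add s (fun i => c i * α i) hj
        rw [← hd] at this
        rw [hd0] at this
        exact eq_neg_of_add_eq_zero_left this
      have h3 : ∑ i ∈ s.erase j, c i * u i = (∑ i ∈ s, c i * u i) - c j * u j := by
        rw [← Finset.sum_erase_add s (fun i => c i * u i) hj]
        ring
      have heq : ∑ i ∈ s, c i * u i
          = ∑ i ∈ s.erase j, c i * (u i - (α i / α j) * u j) := by
        have h1 : ∑ i ∈ s.erase j, c i * (u i - (α i / α j) * u j)
            = (∑ i ∈ s.erase j, c i * u i)
              - (∑ i ∈ s.erase j, c i * α i) * (u j / α j) := by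
          rw [Finset.sum_mul, ← Finset.sum_sub_distrib]
          apply Finset.sum_congr rfl
          intro i _
          field_simp
        rw [h1, h2, h3]
        field_simp
        ring
      rw [heq]
      refine IH (s.erase j) c (fun i => u i - (α i / α j) * u j) ?_ ?_ ?_ ?_
      · rw [Finset.card_erase_of_mem hj, hcard]; simp
      · intro i hi; exact hc i (Finset.mem_of_mem_erase hi)
      · intro i hi
        exact K.sub_mem (hu i (Finset.mem_of_mem_erase hi))
          (K.mul_mem (K.div_mem (hkK (hαk i (Finset.mem_of_mem_erase hi)))
            (hkK (hαk j hj))) (hu j hj))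
      · rw [← heq]; exact hle

/-- O' ∩ span_{k'}(K) = span_{k'}(O' ∩ K). -/
theorem stmt_2 {K' : Type*} [Field K'] {Γ₀ : Type*} [LinearOrderedCommGroupWithZero Γ₀]
    (v' : Valuation K' Γ₀) (K k k' : Subfield K')
    (hkK : k ≤ K) (hkO : ∀ x ∈ k, v' x ≤ 1)
    (hlift : ∀ u ∈ K, v' u = 1 → ∃ α ∈ k, v' (u - α) < 1)
    (hkk' : k ≤ k') (hk'O : ∀ x ∈ k', v' x ≤ 1) :
    {x : K' | v' x ≤ 1} ∩ (Submodule.span k' (K : Set K') : Set K') =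
      (Submodule.span k' ({x : K' | v' x ≤ 1} ∩ (K : Set K')) : Set K') := by
  ext x
  constructor
  · rintro ⟨hx1, hx2⟩
    rw [SetLike.mem_coe, Submodule.mem_span_set'] at hx2
    obtain ⟨n, f, g, hfg⟩ := hx2
    have := stmt_2_key v' K k k' hkK hlift hkk' hk'O n (Finset.univ : Finset (Fin n))
      (fun i => ((f i : K'))) (fun i => ((g i : K'))) (by simp)
      (fun i _ => SetLike.coe_mem (f i)) (fun i _ => (g i).2) ?_
    · have hx : x = ∑ i : Fin n, (f i : K') * (g i : K') := by
        rw [← hfg]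
        exact Finset.sum_congr rfl fun i _ => rfl
      rw [hx]
      exact this
    · have hx : ∑ i : Fin n, (f i : K') * (g i : K') = x := by
        rw [← hfg]
        exact Finset.sum_congr rfl fun i _ => rfl
      rw [hx]
      exact hx1
  · intro hx
    constructor
    · -- O' is a k'-submodule containing the generators
      let M : Submodule k' K' :=
        { carrier := {y : K' | v' y ≤ 1}
          add_mem' := fun {a b} ha hb => le_trans (v'.map_add a b) (max_le ha hb)
          zero_mem' := by simp
          smul_mem' := fun c y hy => by
            have : v' ((c : K') * y) ≤ 1 := by
              rw [Valuation.map_mul]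
              calc v' (c : K') * v' y ≤ 1 * 1 :=
                  mul_le_mul' (hk'O _ (SetLike.coe_mem c)) hy
                _ = 1 := one_mul 1
            simpa [Subfield.smul_def] using this }
      have hle : Submodule.span k' ({x : K' | v' x ≤ 1} ∩ (K : Set K')) ≤ M :=
        Submodule.span_le.mpr Set.inter_subset_left
      exact hle hx
    · exact Submodule.span_mono Set.inter_subset_right hx
end

section
/- Let K' be a field with a valuation v' taking values in a linearly ordered commutative group with zero, with valuation ring O' = {x : v'(x) ≤ 1}. Let k' ⊆ O' be a subfield such that k' lifts the residue field of K', i.e. for every x ∈ O' there exists α ∈ k' with v'(x − α) < 1. Let K ⊆ K' be a subfield, set k := k' ∩ K, and assume k lifts the residue field of K (for every x ∈ O' ∩ K there exists α ∈ k with v'(x − α) < 1). Let res : K → K be a function such that res(K) ⊆ k, res is additive, res(αx) = α·res(x) for all α ∈ k and x ∈ K, and v'(x − res(x)) < 1 for all x ∈ O' ∩ K. Let (eᵢ)_{i ∈ I} be a family in K' that is k'-linearly independent over O' + span_{k'}(K), meaning: any finite k'-linear combination of the eᵢ that lies in the set {u + w : u ∈ O', w ∈ span_{k'}(K)} has all coefficients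 zero. Then there exists a function res' : K' → K' such that res'(K') ⊆ k', res' is additive, res'(αx) = α·res'(x) for all α ∈ k' and x ∈ K', res' agrees with res on K, v'(x − res'(x)) < 1 for all x ∈ O', and res'(eᵢ) = 0 for all i ∈ I. -/
section Aux

variable {K' : Type*} [Field K'] {Γ₀ : Type*} [LinearOrderedCommGroupWithZero Γ₀]

theorem stmt3_small (v' : Valuation K' Γ₀) (k' : Subfield K')
    (hk'O : ∀ x ∈ k', v' x ≤ 1) (α : k') (h : v' (α : K') < 1) : (α : K') = 0 := by
  by_contra hne
  have hα : α ≠ 0 := fun h0 => hne (by rw [h0]; rfl)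
  have h1 : ((α : K')) * ((α⁻¹ : k') : K') = 1 := by
    rw [← Subfield.coe_mul, mul_inv_cancel₀ hα, Subfield.coe_one]
  have h2 : v' ((α : K')) * v' ((α⁻¹ : k') : K') = 1 := by
    rw [← v'.map_mul, h1, v'.map_one]
  have h3 : v' ((α⁻¹ : k') : K') ≤ 1 := hk'O _ (α⁻¹).2
  have h4 : v' ((α : K')) * v' ((α⁻¹ : k') : K') ≤ v' ((α : K')) * 1 :=
    mul_le_mul_right h3 _
  rw [h2, mul_one] at h4
  exact absurd (lt_of_le_of_lt h4 h) (lt_irrefl _)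

/-- Key induction lemma. -/
theorem stmt3_key (v' : Valuation K' Γ₀) (k' K k : Subfield K')
    (hk'O : ∀ x ∈ k', v' x ≤ 1)
    (hk : k = k' ⊓ K)
    (res : K' → K')
    (hres_mem : ∀ x ∈ K, res x ∈ k)
    (hres_add : ∀ x ∈ K, ∀ y ∈ K, res (x + y) = res x + res y)
    (hres_smul : ∀ α ∈ k, ∀ x ∈ K, res (α * x) = α * res x)
    (hres_res : ∀ x ∈ K, v' x ≤ 1 → v' (x - res x) < 1)
    {ι : Type*} :
    ∀ (n : ℕ) (s : Finset ι), s.card ≤ n → ∀ (β : ι → k') (y : ι → K) (α : k'),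
      v' ((α : K') + ∑ i ∈ s, (β i : K') * ((y i : K') - res (y i))) < 1 → (α : K') = 0 := by
  classical
  have hkk' : ∀ x ∈ k, x ∈ k' := fun x hx => by rw [hk] at hx; exact hx.1
  have hkK : ∀ x ∈ k, x ∈ K := fun x hx => by rw [hk] at hx; exact hx.2
  have hres0 : res 0 = 0 := by
    have h := hres_add 0 K.zero_mem 0 K.zero_mem
    rw [add_zero] at h
    exact (left_eq_add.mp h)
  have hres_neg : ∀ x ∈ K, res (-x) = - res x := by
    intro x hx
    have h := hres_add x hx (-x) (K.neg_mem hx)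
    rw [add_neg_cancel, hres0] at h
    exact (neg_eq_of_add_eq_zero_right h.symm).symm
  have hres_sub : ∀ x ∈ K, ∀ z ∈ K, res (x - z) = res x - res z := by
    intro x hx z hz
    rw [sub_eq_add_neg, hres_add x hx (-z) (K.neg_mem hz), hres_neg z hz, sub_eq_add_neg]
  have hres1 : res 1 = 1 := by
    have h1 : v' ((1:K') - res 1) < 1 := hres_res 1 K.one_mem (le_of_eq v'.map_one)
    have hmem : (1:K') - res 1 ∈ k' :=
      k'.sub_mem k'.one_mem (hkk' _ (hres_mem 1 K.one_mem))
    have h2 : ((⟨(1:K') - res 1, hmem⟩ : k') : K') = 0 := stmt3_small v' k' hk'O _ h1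
    have h3 : (1:K') - res 1 = 0 := h2
    exact (sub_eq_zero.mp h3).symm
  intro n
  induction n with
  | zero =>
    intro s hs β y α h
    have hse : s = ∅ := Finset.card_eq_zero.mp (Nat.le_zero.mp hs)
    subst hse
    simp only [Finset.sum_empty, add_zero] at h
    exact stmt3_small v' k' hk'O α h
  | succ n ih =>
    intro s hs β y α h
    by_cases hP : ∀ i ∈ s, β i ≠ 0 → v' ((y i : K')) ≤ 1
    · -- all elements integral: direct estimate
      have hterm : ∀ i ∈ s, v' ((β i : K') * ((y i : K') - res (y i))) < 1 := by
        intro i hi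
        by_cases hb : β i = 0
        · rw [hb]
          simp only [ZeroMemClass.coe_zero, zero_mul, v'.map_zero]
          exact zero_lt_one
        · rw [v'.map_mul]
          calc v' ((β i : K')) * v' ((y i : K') - res (y i))
              ≤ 1 * v' ((y i : K') - res (y i)) := mul_le_mul_left (hk'O _ (β i).2) _
            _ = v' ((y i : K') - res (y i)) := one_mul _
            _ < 1 := hres_res _ (y i).2 (hP i hi hb)
      have hsum : v' (∑ i ∈ s, (β i : K') * ((y i : K') - res (y i))) < 1 :=
        Valuation.map_sum_lt v' one_ne_zero hterm
      have hα : v' (α : K') < 1 := by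
        have hrw : (α : K') =
            ((α : K') + ∑ i ∈ s, (β i : K') * ((y i : K') - res (y i))) -
              ∑ i ∈ s, (β i : K') * ((y i : K') - res (y i)) := by ring
        rw [hrw]
        exact lt_of_le_of_lt (v'.map_sub _ _) (max_lt h hsum)
      exact stmt3_small v' k' hk'O α hα
    · -- there is a term with big valuation
      push_neg at hP
      obtain ⟨i₁, hi₁s, hβ₁, hv₁⟩ := hP
      set P : Finset ι := s.filter (fun i => β i ≠ 0 ∧ 1 < v' ((y i : K'))) with hPdef
      have hPne : P.Nonempty := ⟨i₁, by simp [hPdef, hi₁s, hβ₁, hv₁]⟩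
      obtain ⟨i₀, hi₀P, hmaxP⟩ := P.exists_max_image (fun i => v' ((y i : K'))) hPne
      have hi₀s : i₀ ∈ s := (Finset.mem_filter.mp hi₀P).1
      have hβ₀ : β i₀ ≠ 0 := (Finset.mem_filter.mp hi₀P).2.1
      have hv₀ : 1 < v' ((y i₀ : K')) := (Finset.mem_filter.mp hi₀P).2.2
      set Y : K' := (y i₀ : K') with hYdef
      have hY0 : (0:Γ₀) < v' Y := lt_trans zero_lt_one hv₀
      have hYne : Y ≠ 0 := by
        intro h0
        rw [h0, v'.map_zero] at hv₀
        exact absurd hv₀ (by simp)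
      have hmax' : ∀ i ∈ s, β i ≠ 0 → v' ((y i : K')) ≤ v' Y := by
        intro i hi hb
        by_cases hbig : 1 < v' ((y i : K'))
        · exact hmaxP i (Finset.mem_filter.mpr ⟨hi, hb, hbig⟩)
        · exact le_trans (not_lt.mp hbig) (le_of_lt hv₀)
      have hYinv : (v' Y)⁻¹ < 1 := (inv_lt_one₀ hY0).mpr hv₀
      have hdiv_lt : ∀ x : K', v' x ≤ 1 → v' (x / Y) < 1 := by
        intro x hx
        rw [map_div₀ v', div_eq_mul_inv]
        calc v' x * (v' Y)⁻¹ ≤ 1 * (v' Y)⁻¹ := mul_le_mul_left hx _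
          _ = (v' Y)⁻¹ := one_mul _
          _ < 1 := hYinv
      -- the residues of the normalized elements
      have hcK : ∀ i : ι, (y i : K') / Y ∈ K := fun i => K.div_mem (y i).2 (y i₀).2
      set c : ι → K' := fun i => res ((y i : K') / Y) with hcdef
      have hck : ∀ i, c i ∈ k := fun i => hres_mem _ (hcK i)
      set A : K' := (α : K') + ∑ i ∈ s, (β i : K') * ((y i : K') - res (y i)) with hAdef
      set T : K' := ∑ i ∈ s, (β i : K') * ((y i : K') / Y - c i) with hTdef
      set S : K' := ∑ i ∈ s, (β i : K') * res ((y i : K')) with hSdef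
      set γ : K' := ∑ i ∈ s, (β i : K') * c i with hγdef
      have hγk' : γ ∈ k' :=
        sum_mem (fun i _ => k'.mul_mem (β i).2 (hkk' _ (hck i)))
      -- identity
      have hA : A / Y = (α : K') / Y + (γ + T - S / Y) := by
        have expand : ∀ i ∈ s, ((β i : K') * ((y i : K') - res ((y i : K')))) / Y
            = (β i : K') * c i + (β i : K') * ((y i : K') / Y - c i)
              - ((β i : K') * res ((y i : K'))) / Y := by
          intro i _
          field_simp
          ring
        calc A / Y
            = (α : K') / Y + ∑ i ∈ s, ((β i : K') * ((y i : K') - res ((y i : K')))) / Y := by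
              rw [hAdef, add_div, Finset.sum_div]
          _ = (α : K') / Y + ∑ i ∈ s, ((β i : K') * c i
                + (β i : K') * ((y i : K') / Y - c i)
                - ((β i : K') * res ((y i : K'))) / Y) := by
              rw [Finset.sum_congr rfl expand]
          _ = (α : K') / Y + (γ + T - S / Y) := by
              rw [Finset.sum_sub_distrib, Finset.sum_add_distrib, hγdef, hTdef, hSdef,
                Finset.sum_div]
      have hid : γ = A / Y - (α : K') / Y - T + S / Y := by
        rw [hA]; ring
      -- each piece small
      have h1 : v' (A / Y) < 1 := hdiv_lt A (le_of_lt h)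
      have h2 : v' ((α : K') / Y) < 1 := hdiv_lt _ (hk'O _ α.2)
      have hS1 : v' S ≤ 1 := by
        refine Valuation.map_sum_le v' fun i _ => ?_
        rw [v'.map_mul]
        exact mul_le_one' (hk'O _ (β i).2) (hk'O _ (hkk' _ (hres_mem _ (y i).2)))
      have h3 : v' (S / Y) < 1 := hdiv_lt _ hS1
      have h4 : v' T < 1 := by
        refine Valuation.map_sum_lt v' one_ne_zero fun i hi => ?_
        by_cases hb : β i = 0
        · rw [hb]
          simp only [ZeroMemClass.coe_zero, zero_mul, v'.map_zero]
          exact zero_lt_one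
        · rw [v'.map_mul]
          have hyle : v' ((y i : K') / Y) ≤ 1 := by
            rw [map_div₀ v', div_eq_mul_inv]
            calc v' ((y i : K')) * (v' Y)⁻¹ ≤ v' Y * (v' Y)⁻¹ :=
                  mul_le_mul_left (hmax' i hi hb) _
              _ = 1 := mul_inv_cancel₀ (ne_of_gt hY0)
          have h5 := hres_res _ (hcK i) hyle
          calc v' ((β i : K')) * v' ((y i : K') / Y - c i)
              ≤ 1 * v' ((y i : K') / Y - c i) := mul_le_mul_left (hk'O _ (β i).2) _
            _ = v' ((y i : K') / Y - c i) := one_mul _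
            _ < 1 := h5
      have hγlt : v' γ < 1 := by
        rw [hid]
        refine lt_of_le_of_lt (v'.map_add _ _) (max_lt ?_ h3)
        refine lt_of_le_of_lt (v'.map_sub _ _) (max_lt ?_ h4)
        exact lt_of_le_of_lt (v'.map_sub _ _) (max_lt h1 h2)
      have hγ0 : γ = 0 := stmt3_small v' k' hk'O ⟨γ, hγk'⟩ hγlt
      have hc0 : c i₀ = 1 := by
        rw [hcdef]
        simp only
        rw [← hYdef, div_self hYne, hres1]
      -- new family
      set y' : ι → K := fun i =>
        ⟨(y i : K') - c i * Y, K.sub_mem (y i).2 (K.mul_mem (hkK _ (hck i)) (y i₀).2)⟩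
        with hy'def
      have hresy' : ∀ i, res ((y' i : K')) = res ((y i : K')) - c i * res Y := by
        intro i
        show res ((y i : K') - c i * Y) = _
        rw [hres_sub _ (y i).2 _ (K.mul_mem (hkK _ (hck i)) (y i₀).2),
          hres_smul (c i) (hck i) Y (y i₀).2]
      have hterm' : ∀ i, (β i : K') * ((y' i : K') - res ((y' i : K'))) =
          (β i : K') * ((y i : K') - res ((y i : K'))) - ((β i : K') * c i) * (Y - res Y) := by
        intro i
        rw [hresy' i]
        show (β i : K') * (((y i : K') - c i * Y) - (res ((y i : K')) - c i * res Y)) = _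
        ring
      have hsum_c : ∑ i ∈ s.erase i₀, (β i : K') * c i = - ((β i₀ : K') * c i₀) := by
        have h5 := Finset.add_sum_erase s (fun i => (β i : K') * c i) hi₀s
        rw [← hγdef, hγ0] at h5
        exact (neg_eq_of_add_eq_zero_right h5).symm
      have hnew : ∑ i ∈ s.erase i₀, (β i : K') * ((y' i : K') - res ((y' i : K'))) =
          ∑ i ∈ s, (β i : K') * ((y i : K') - res ((y i : K'))) := by
        calc ∑ i ∈ s.erase i₀, (β i : K') * ((y' i : K') - res ((y' i : K')))
            = ∑ i ∈ s.erase i₀, ((β i : K') * ((y i : K') - res ((y i : K')))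
                - ((β i : K') * c i) * (Y - res Y)) :=
              Finset.sum_congr rfl fun i _ => hterm' i
          _ = ∑ i ∈ s.erase i₀, (β i : K') * ((y i : K') - res ((y i : K')))
                - (∑ i ∈ s.erase i₀, (β i : K') * c i) * (Y - res Y) := by
              rw [Finset.sum_sub_distrib, Finset.sum_mul]
          _ = (β i₀ : K') * ((y i₀ : K') - res ((y i₀ : K')))
                + ∑ i ∈ s.erase i₀, (β i : K') * ((y i : K') - res ((y i : K'))) := by
              rw [hsum_c, hc0, ← hYdef]; ring
          _ = ∑ i ∈ s, (β i : K') * ((y i : K') - res ((y i : K'))) :=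
              Finset.add_sum_erase s
                (fun i => (β i : K') * ((y i : K') - res ((y i : K')))) hi₀s
      have hcard : (s.erase i₀).card ≤ n := by
        rw [Finset.card_erase_of_mem hi₀s]
        omega
      refine ih (s.erase i₀) hcard β y' α ?_
      rw [hnew]
      exact h

end Aux

set_option maxHeartbeats 1000000 in
set_option synthInstance.maxHeartbeats 400000 in
/-- extension of a total residue map res on K to a total residue map res' on K'
    vanishing on a family (eᵢ) that is k'-linearly independent over O' + span_{k'}(K). -/
theorem stmt_3 {K' : Type*} [Field K'] {Γ₀ : Type*} [LinearOrderedCommGroupWithZero Γ₀]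
    (v' : Valuation K' Γ₀) (k' K k : Subfield K')
    (hk'O : ∀ x ∈ k', v' x ≤ 1)
    (hk'lift : ∀ x : K', v' x ≤ 1 → ∃ α ∈ k', v' (x - α) < 1)
    (hk : k = k' ⊓ K)
    (hklift : ∀ x ∈ K, v' x ≤ 1 → ∃ α ∈ k, v' (x - α) < 1)
    (res : K' → K')
    (hres_mem : ∀ x ∈ K, res x ∈ k)
    (hres_add : ∀ x ∈ K, ∀ y ∈ K, res (x + y) = res x + res y)
    (hres_smul : ∀ α ∈ k, ∀ x ∈ K, res (α * x) = α * res x)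
    (hres_res : ∀ x ∈ K, v' x ≤ 1 → v' (x - res x) < 1)
    {I : Type*} (e : I → K')
    (he_indep : ∀ (s : Finset I) (c : I → K'), (∀ i, c i ∈ k') →
      (∃ u w : K', v' u ≤ 1 ∧ w ∈ Submodule.span k' (K : Set K') ∧
        (∑ i ∈ s, c i * e i) = u + w) →
      ∀ i ∈ s, c i = 0) :
    ∃ res' : K' → K',
      (∀ x : K', res' x ∈ k') ∧
      (∀ x y : K', res' (x + y) = res' x + res' y) ∧
      (∀ α ∈ k', ∀ x : K', res' (α * x) = α * res' x) ∧
      (∀ x ∈ K, res' x = res x) ∧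
      (∀ x : K', v' x ≤ 1 → v' (x - res' x) < 1) ∧
      (∀ i : I, res' (e i) = 0) := by
  classical
  have hkk' : ∀ x ∈ k, x ∈ k' := fun x hx => by rw [hk] at hx; exact hx.1
  have hkK : ∀ x ∈ k, x ∈ K := fun x hx => by rw [hk] at hx; exact hx.2
  -- submodules of K' over k'
  let L : Submodule k' K' := Submodule.span k' {1}
  let M : Submodule k' K' :=
    { carrier := {x | v' x < 1}
      add_mem' := fun ha hb => lt_of_le_of_lt (v'.map_add _ _) (max_lt ha hb)
      zero_mem' := by
        show v' 0 < 1
        rw [v'.map_zero]; exact zero_lt_one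
      smul_mem' := fun cc x hx => by
        show v' ((cc : K') * x) < 1
        rw [v'.map_mul]
        calc v' (cc : K') * v' x ≤ 1 * v' x := mul_le_mul_left (hk'O _ cc.2) _
          _ = v' x := one_mul _
          _ < 1 := hx }
  let E : Submodule k' K' := Submodule.span k' (Set.range e)
  let D : Submodule k' K' := Submodule.span k' (Set.range (fun z : K => (z : K') - res z))
  let Q : Submodule k' K' := M ⊔ E ⊔ D
  have hLmem : ∀ z ∈ k', z ∈ L := by
    intro z hz
    exact Submodule.mem_span_singleton.mpr ⟨⟨z, hz⟩, mul_one z⟩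
  have hLk' : ∀ z ∈ L, z ∈ k' := by
    intro z hz
    obtain ⟨a, ha⟩ := Submodule.mem_span_singleton.mp hz
    rw [← ha]
    show (a : K') * 1 ∈ k'
    rw [mul_one]; exact a.2
  -- disjointness of L and Q
  have hdisj : ∀ x ∈ L, x ∈ Q → x = 0 := by
    intro x hxL hxQ
    obtain ⟨a, ha⟩ := Submodule.mem_span_singleton.mp hxL
    have hxa : x = (a : K') := by
      rw [← ha]; exact mul_one _
    obtain ⟨me, hme, d, hd, hsum⟩ := Submodule.mem_sup.mp hxQ
    obtain ⟨m, hm, ε, hε, hme'⟩ := Submodule.mem_sup.mp hme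
    have hm' : v' m < 1 := hm
    obtain ⟨cD, hcD⟩ := Finsupp.mem_span_range_iff_exists_finsupp.mp hd
    obtain ⟨cE, hcE⟩ := Finsupp.mem_span_range_iff_exists_finsupp.mp hε
    have hd_spanK : d ∈ Submodule.span k' (K : Set K') := by
      rw [← hcD]
      refine Submodule.sum_mem _ fun z _ => ?_
      refine Submodule.smul_mem _ _ (Submodule.sub_mem _ ?_ ?_)
      · exact Submodule.subset_span z.2
      · exact Submodule.subset_span (hkK _ (hres_mem _ z.2))
    have hu : v' (x - m) ≤ 1 := by
      rw [hxa]
      exact le_trans (v'.map_sub _ _) (max_le (hk'O _ a.2) (le_of_lt hm'))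
    have hεval : ε = x - m - d := by
      linear_combination hme' + hsum
    have hsum_eq : ∑ i ∈ cE.support, ((cE i : K')) * e i = (x - m) + (-d) := by
      have h6 : ∑ i ∈ cE.support, ((cE i : K')) * e i = ε := hcE
      rw [h6, hεval]; ring
    have hε0 : ε = 0 := by
      have happ := he_indep cE.support (fun i => ((cE i : K'))) (fun i => (cE i).2)
        ⟨x - m, -d, hu, Submodule.neg_mem _ hd_spanK, hsum_eq⟩
      rw [← hcE]
      refine Finset.sum_eq_zero fun i hi => ?_
      have h0 : ((cE i : K')) = 0 := happ i hi
      show ((cE i : K')) * e i = 0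
      rw [h0, zero_mul]
    have hd' : ∑ z ∈ cD.support, ((cD z : K')) * ((z : K') - res (z : K')) = d := hcD
    have hxd : v' ((a : K') + ∑ z ∈ cD.support,
        ((-(cD z) : k') : K') * ((z : K') - res ((z : K')))) < 1 := by
      have hx_eq : (a : K') + ∑ z ∈ cD.support,
          ((-(cD z) : k') : K') * ((z : K') - res ((z : K'))) = m := by
        have h7 : ∑ z ∈ cD.support, ((-(cD z) : k') : K') * ((z : K') - res ((z : K')))
            = - ∑ z ∈ cD.support, ((cD z : K')) * ((z : K') - res ((z : K'))) := by
          rw [← Finset.sum_neg_distrib]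
          refine Finset.sum_congr rfl fun z _ => ?_
          push_cast
          ring
        rw [h7, hd']
        rw [hxa] at hεval
        rw [hε0] at hεval
        linear_combination -hεval
      rw [hx_eq]
      exact hm'
    have ha0 : (a : K') = 0 :=
      stmt3_key v' k' K k hk'O hk res hres_mem hres_add hres_smul hres_res
        cD.support.card cD.support le_rfl (fun z => -(cD z)) (fun z => z) a hxd
    rw [hxa, ha0]
  -- complement
  obtain ⟨C, hC⟩ := Submodule.exists_isCompl (L ⊔ Q)
  have hcompl : IsCompl L (Q ⊔ C) := by
    constructor
    · rw [Submodule.disjoint_def]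
      intro x hxL hxN
      obtain ⟨q, hq, cc, hcc, hqc⟩ := Submodule.mem_sup.mp hxN
      have hcc0 : cc = 0 := by
        have hccLQ : cc ∈ L ⊔ Q := by
          have hcc_eq : cc = x - q := by linear_combination hqc
          rw [hcc_eq]
          exact Submodule.sub_mem _ (Submodule.mem_sup_left hxL) (Submodule.mem_sup_right hq)
        exact (Submodule.disjoint_def.mp hC.disjoint) cc hccLQ hcc
      have hxq : x ∈ Q := by rw [← hqc, hcc0, add_zero]; exact hq
      exact hdisj x hxL hxq
    · rw [codisjoint_iff, ← sup_assoc]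
      exact codisjoint_iff.mp hC.codisjoint
  set N : Submodule k' K' := Q ⊔ C with hNdef
  let π := L.linearProjOfIsCompl N hcompl
  have hproj : ∀ l ∈ L, ∀ nn ∈ N, ((π (l + nn)) : K') = l := by
    intro l hl nn hnn
    have h1 : π l = ⟨l, hl⟩ := Submodule.linearProjOfIsCompl_apply_left hcompl ⟨l, hl⟩
    have h2 : π nn = 0 := Submodule.linearProjOfIsCompl_apply_right hcompl ⟨nn, hnn⟩
    rw [map_add, h1, h2, add_zero]
  have hMN : ∀ x, x ∈ M → x ∈ N :=
    fun x hx => Submodule.mem_sup_left (Submodule.mem_sup_left (Submodule.mem_sup_left hx))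
  have hEN : ∀ x, x ∈ E → x ∈ N :=
    fun x hx => Submodule.mem_sup_left (Submodule.mem_sup_left (Submodule.mem_sup_right hx))
  have hDN : ∀ x, x ∈ D → x ∈ N :=
    fun x hx => Submodule.mem_sup_left (Submodule.mem_sup_right hx)
  refine ⟨fun x => ((π x : K')), fun x => hLk' _ (π x).2, ?_, ?_, ?_, ?_, ?_⟩
  · -- additivity
    intro x y
    show ((π (x + y) : K')) = ((π x : K')) + ((π y : K'))
    rw [map_add]
    rfl
  · -- smul
    intro α hα x
    show ((π (α * x) : K')) = α * ((π x : K'))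
    have hsm : α * x = (⟨α, hα⟩ : k') • x := rfl
    rw [hsm, map_smul]
    rfl
  · -- agrees with res on K
    intro x hx
    have h1 : res x ∈ L := hLmem _ (hkk' _ (hres_mem x hx))
    have h2 : x - res x ∈ N := hDN _ (Submodule.subset_span ⟨⟨x, hx⟩, rfl⟩)
    have hxe : x = res x + (x - res x) := by ring
    show ((π x : K')) = res x
    conv_lhs => rw [hxe]
    exact hproj _ h1 _ h2
  · -- residue property
    intro x hxv
    obtain ⟨α, hα, hlt⟩ := hk'lift x hxv
    have h1 : α ∈ L := hLmem _ hα
    have h2 : x - α ∈ N := hMN _ hlt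
    have hxe : x = α + (x - α) := by ring
    have hπ : ((π x : K')) = α := by
      conv_lhs => rw [hxe]
      exact hproj _ h1 _ h2
    show v' (x - ((π x : K'))) < 1
    rw [hπ]
    exact hlt
  · -- vanishes on e
    intro i
    have h2 : e i ∈ N := hEN _ (Submodule.subset_span ⟨i, rfl⟩)
    have h3 : π (e i) = 0 := Submodule.linearProjOfIsCompl_apply_right hcompl ⟨e i, h2⟩
    show ((π (e i) : K')) = 0
    rw [h3]
    rfl
end

section
/- Let K be a field with a valuation v taking values in a linearly ordered commutative group with zero. Let a ∈ K with 0 < v(a) < 1, let β ∈ K with v(β) ≤ 1, and let n ∈ ℕ. Then 1 − aβ ≠ 0 and v( a⁻ⁿ·(1 − aβ)⁻¹ − Σ_{i=0}^{n} a^{i−n}·β^i ) < 1, i.e. a⁻ⁿ/(1 − aβ) is congruent to βⁿ + a⁻¹βⁿ⁻¹ + ⋯ + a⁻ⁿ modulo the maximal ideal of v. -/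
/-! The sum is `a⁻ⁿ` times the truncated geometric series in `x = aβ`, and
`(1 - x)⁻¹ - ∑_{i ≤ n} xⁱ = xⁿ⁺¹ (1 - x)⁻¹`. Since `v x < 1`, `1 - x` is a unit of valuation `1`,
so the difference has valuation `v(a)⁻ⁿ v(aβ)ⁿ⁺¹ = v(a) v(β)ⁿ⁺¹ ≤ v(a) < 1`. -/

open Finset

theorem zpow_sub_natCast_mul_pow {K : Type*} [Field K] {a : K} (ha : a ≠ 0) (b : K) (i n : ℕ) :
    a ^ ((i : ℤ) - n) * b ^ i = a⁻¹ ^ n * (a * b) ^ i := by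
  rw [zpow_sub₀ ha, zpow_natCast, zpow_natCast, mul_pow, inv_pow, div_eq_mul_inv]
  ring

theorem inv_one_sub_sub_geom_sum {K : Type*} [Field K] {x : K} (hx : x ≠ 1) (m : ℕ) :
    (1 - x)⁻¹ - ∑ i ∈ range m, x ^ i = x ^ m * (1 - x)⁻¹ := by
  have h : 1 - x ≠ 0 := sub_ne_zero.2 hx.symm
  field_simp
  linear_combination geom_sum_mul x m

theorem Valuation.map_inv_one_sub_sub_geom_sum {K Γ₀ : Type*} [Field K]
    [LinearOrderedCommGroupWithZero Γ₀] (v : Valuation K Γ₀) {x : K} (hx : v x < 1) (m : ℕ) :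
    v ((1 - x)⁻¹ - ∑ i ∈ range m, x ^ i) = v x ^ m := by
  have hx1 : x ≠ 1 := by
    rintro rfl
    exact hx.ne v.map_one
  rw [inv_one_sub_sub_geom_sum hx1, map_mul, map_inv₀, v.map_one_sub_of_lt hx, inv_one, mul_one,
    map_pow]

/-- for 0 < v(a) < 1 and v(β) ≤ 1, one has 1 − aβ ≠ 0 and
    a⁻ⁿ/(1 − aβ) ≡ Σ_{i=0}^{n} a^{i−n} β^i modulo the maximal ideal. -/
theorem stmt_6 {K : Type*} [Field K] {Γ₀ : Type*} [LinearOrderedCommGroupWithZero Γ₀]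
    (v : Valuation K Γ₀) (a β : K) (ha0 : 0 < v a) (ha1 : v a < 1) (hβ : v β ≤ 1) (n : ℕ) :
    1 - a * β ≠ 0 ∧
      v (a⁻¹ ^ n * (1 - a * β)⁻¹ -
        ∑ i ∈ Finset.range (n + 1), a ^ ((i : ℤ) - (n : ℤ)) * β ^ i) < 1 := by
  have ha : a ≠ 0 := v.pos_iff.1 ha0
  have hab : v (a * β) < 1 := by
    rw [map_mul]
    exact (mul_le_of_le_one_right' hβ).trans_lt ha1
  refine ⟨fun h ↦ by simpa [h] using v.map_one_sub_of_lt hab, ?_⟩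
  have hdiff : a⁻¹ ^ n * (1 - a * β)⁻¹ -
      ∑ i ∈ range (n + 1), a ^ ((i : ℤ) - (n : ℤ)) * β ^ i =
      a⁻¹ ^ n * ((1 - a * β)⁻¹ - ∑ i ∈ range (n + 1), (a * β) ^ i) := by
    simp only [zpow_sub_natCast_mul_pow ha, mul_sub, mul_sum]
  have hcancel : a⁻¹ ^ n * (a * β) ^ (n + 1) = a * β ^ (n + 1) := by
    rw [mul_pow, pow_succ, pow_succ, inv_pow]
    field_simp
  rw [hdiff, map_mul, v.map_inv_one_sub_sub_geom_sum hab, ← map_pow, ← map_mul, hcancel,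
    map_mul, map_pow]
  exact (mul_le_of_le_one_right' (pow_le_one' hβ _)).trans_lt ha1
end

section
/- Let k be a field, Γ a linearly ordered abelian group, and K = k((t^Γ)) the Hahn series field (HahnSeries Γ k). Then for every x ∈ K, x lies in the image of the constant embedding C : k → K if and only if for all y ∈ K, res(x·y) = res(x)·res(y), where res(z) denotes the coefficient of z at 0. In other words, the subfield k ⊆ k((t^Γ)) is exactly {x : ∀ y, res(xy) = res(x)·res(y)}. -/
/-!
Multiplying by the constant `c` scales every coefficient by `c`, so constants satisfy
`res (x * y) = res x * res y`. Conversely, testing the identity against the monomial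
`y = t ^ (-a)` with `a ≠ 0` gives `x.coeff a = res (x * t ^ (-a)) = res x * 0 = 0`,
so `x` has no coefficient outside degree `0`.
-/

namespace HahnSeries

theorem eq_C_coeff_zero_of_coeff_eq_zero {Γ R : Type*} [AddCommMonoid Γ] [PartialOrder Γ]
    [IsOrderedCancelAddMonoid Γ] [NonAssocSemiring R] {x : HahnSeries Γ R}
    (hx : ∀ a ≠ 0, x.coeff a = 0) : x = C (x.coeff 0) := by
  ext a
  rcases eq_or_ne a 0 with rfl | ha
  · simp
  · rw [hx a ha, C_apply, coeff_single_of_ne ha]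

theorem coeff_zero_mul_single_neg {Γ R : Type*} [AddCommGroup Γ] [PartialOrder Γ]
    [IsOrderedAddMonoid Γ] [NonUnitalNonAssocSemiring R] (x : HahnSeries Γ R) (a : Γ) (r : R) :
    (x * single (-a) r).coeff 0 = x.coeff a * r := by
  rw [← add_neg_cancel a, coeff_mul_single_add]

end HahnSeries

/-- in the Hahn series field k((t^Γ)), an element x lies in the image of the
    constant embedding C : k → k((t^Γ)) iff res(x·y) = res(x)·res(y) for all y, where
    res(z) = z.coeff 0. -/
theorem stmt_7 {k : Type*} [Field k] {Γ : Type*} [AddCommGroup Γ] [LinearOrder Γ] [IsOrderedAddMonoid Γ]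
    (x : HahnSeries Γ k) :
    (∃ c : k, HahnSeries.C c = x) ↔
      ∀ y : HahnSeries Γ k, (x * y).coeff 0 = x.coeff 0 * y.coeff 0 := by
  constructor
  · rintro ⟨c, rfl⟩ y
    rw [HahnSeries.C_apply, HahnSeries.coeff_single_zero_mul, HahnSeries.coeff_single_same]
  · intro hres
    refine ⟨x.coeff 0, (HahnSeries.eq_C_coeff_zero_of_coeff_eq_zero fun a ha => ?_).symm⟩
    have := hres (HahnSeries.single (-a) 1)
    rwa [HahnSeries.coeff_zero_mul_single_neg, mul_one,
      HahnSeries.coeff_single_of_ne (neg_ne_zero.mpr ha).symm, mul_zero] at this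
end

section
/- Let k be a field, Γ a linearly ordered abelian group, and γ ∈ Γ with γ > 0. Then for every a ∈ k((t^Γ)) and every y ∈ k: res( a · (1 − single γ y)⁻¹ ) = Σ_{n ∈ ℕ} a.coeff(−n·γ) · yⁿ, where the sum has only finitely many nonzero terms (a finitely supported sum over ℕ). Here res(z) = z.coeff 0, and single γ y is the series y·t^γ, so that a·(1 − single γ y)⁻¹ is a/(1 − t^γ y). -/
/-!
Put `b = a * (1 - y t^γ)⁻¹`. Comparing coefficients in `b * (1 - y t^γ) = a` gives
`b_q = a_q + y b_{q-γ}`, which telescopes to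
`b_0 = ∑_{i<n} a_{-iγ} y^i + b_{-nγ} y^n` for every `n`. Since `γ > 0`, the exponents `-nγ` form a
strictly decreasing sequence, so the well-ordered supports of `a` and `b` contain only finitely many
of them; for large `n` the remainder vanishes and the partial sum is the whole finite sum.
-/

open Filter Finset

namespace HahnSeries

variable {Γ : Type*} [AddCommGroup Γ] [PartialOrder Γ] [IsOrderedAddMonoid Γ]

theorem eventually_coeff_neg_nsmul_eq_zero {R : Type*} [Zero R] {γ : Γ} (hγ : 0 < γ)
    (c : HahnSeries Γ R) : ∀ᶠ n : ℕ in atTop, c.coeff (-(n • γ)) = 0 := by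
  obtain ⟨N, hN⟩ := c.isPWO_support.exists_notMem_of_gt (f := fun n : ℕ => -(n • γ))
    fun m n hmn => (neg_lt_neg (nsmul_lt_nsmul_left hγ hmn)).not_ge
  exact eventually_atTop.2 ⟨N + 1, fun n hn => Function.notMem_support.1 (hN n hn)⟩

theorem coeff_mul_one_sub_single {R : Type*} [Ring R] (b : HahnSeries Γ R) (γ : Γ) (y : R)
    (q : Γ) : (b * (1 - single γ y)).coeff q = b.coeff q - b.coeff (q - γ) * y := by
  rw [mul_sub, mul_one, coeff_sub, ← coeff_mul_single_add (a := q - γ), sub_add_cancel]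

theorem coeff_zero_eq_sum_range_add {R : Type*} [CommRing R] (b : HahnSeries Γ R) (γ : Γ)
    (y : R) (n : ℕ) :
    b.coeff 0 = ∑ i ∈ range n, (b * (1 - single γ y)).coeff (-(i • γ)) * y ^ i
      + b.coeff (-(n • γ)) * y ^ n := by
  induction n with
  | zero => simp
  | succ n ih =>
    rw [ih, sum_range_succ, coeff_mul_one_sub_single, succ_nsmul, neg_add, ← sub_eq_add_neg]
    ring

end HahnSeries

open HahnSeries in
/-- for γ > 0 in Γ, a ∈ k((t^Γ)) and y ∈ k,
    res(a/(1 − t^γ y)) = Σ_{n ∈ ℕ} a.coeff(−n·γ)·yⁿ, a finitely supported sum. -/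
theorem stmt_8 {k : Type*} [Field k] {Γ : Type*} [AddCommGroup Γ] [LinearOrder Γ] [IsOrderedAddMonoid Γ]
    (γ : Γ) (hγ : 0 < γ) (a : HahnSeries Γ k) (y : k) :
    {n : ℕ | a.coeff (-(n • γ)) * y ^ n ≠ 0}.Finite ∧
      (a * (1 - HahnSeries.single γ y)⁻¹).coeff 0 = ∑ᶠ n : ℕ, a.coeff (-(n • γ)) * y ^ n := by
  set b := a * (1 - single γ y)⁻¹
  have hu : (1 - single γ y : HahnSeries Γ k) ≠ 0 := fun h => by
    simpa [coeff_single_of_ne hγ.ne] using congr_arg (coeff · 0) h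
  have hb : b * (1 - single γ y) = a := inv_mul_cancel_right₀ hu a
  have ha_term : ∀ᶠ n : ℕ in atTop, a.coeff (-(n • γ)) * y ^ n = 0 :=
    (eventually_coeff_neg_nsmul_eq_zero hγ a).mono fun n h => by rw [h, zero_mul]
  obtain ⟨N, hN⟩ := (ha_term.and (eventually_coeff_neg_nsmul_eq_zero hγ b)).exists_forall_of_atTop
  refine ⟨eventually_cofinite.1 (Nat.cofinite_eq_atTop ▸ ha_term), ?_⟩
  rw [coeff_zero_eq_sum_range_add b γ y N, hb, (hN N le_rfl).2, zero_mul, add_zero]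
  refine (finsum_eq_sum_of_support_subset _ fun n hn => ?_).symm
  simpa using fun h : N ≤ n => hn (hN n h).1
end

section
/- Let k be a field and k((t)) the Laurent series field (HahnSeries ℤ k). Let a, b ∈ k((t)) with b.coeff q = 0 for all q ≤ 0 (i.e. b lies in the maximal ideal), and let n ∈ ℕ be such that (a·bⁿ).coeff q = 0 for all q ≤ 0 (i.e. a·bⁿ lies in the maximal ideal). Then for every β ∈ k: res( a · (1 − b·C β)⁻¹ ) = Σ_{i=0}^{n−1} res(a·bⁱ) · βⁱ, where res(z) = z.coeff 0 and C : k → k((t)) is the constant embedding. -/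
/-! Write `x = b · C β`, an element of the maximal ideal. Multiplying the truncated geometric
series by `1 - x` gives `(1 - x)⁻¹ = ∑_{i<n} xⁱ + xⁿ (1 - x)⁻¹`. Since `1 - x` is a unit of the
valuation ring, the remainder `a xⁿ (1 - x)⁻¹ = (a bⁿ) · C (βⁿ) · (1 - x)⁻¹` lies in the maximal
ideal and has no constant coefficient, while the residue of `a xⁱ` is `res (a bⁱ) · βⁱ`. -/

open Finset

theorem inv_one_sub_eq_geom_sum_add {K : Type*} [Field K] {x : K} (hx : x ≠ 1) (n : ℕ) :
    (1 - x)⁻¹ = ∑ i ∈ range n, x ^ i + x ^ n * (1 - x)⁻¹ := by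
  have hx' : 1 - x ≠ 0 := sub_ne_zero.mpr hx.symm
  calc (1 - x)⁻¹ = ((1 - x) * ∑ i ∈ range n, x ^ i + x ^ n) * (1 - x)⁻¹ := by
        rw [mul_neg_geom_sum, sub_add_cancel, one_mul]
    _ = ∑ i ∈ range n, x ^ i + x ^ n * (1 - x)⁻¹ := by
        rw [add_mul, mul_comm (1 - x), mul_assoc, mul_inv_cancel₀ hx', mul_one]

namespace HahnSeries

variable {Γ R : Type*} [LinearOrder Γ]

theorem lt_orderTop_iff_forall_le [Zero R] {x : R⟦Γ⟧} {g : Γ} :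
    g < x.orderTop ↔ ∀ j ≤ g, x.coeff j = 0 := by
  refine ⟨fun h j hj => coeff_eq_zero_of_lt_orderTop ((WithTop.coe_le_coe.mpr hj).trans_lt h),
    fun H => ?_⟩
  by_contra! hle
  have hx : x ≠ 0 := by rintro rfl; simp at hle
  obtain ⟨m, hm⟩ := WithTop.ne_top_iff_exists.mp (orderTop_ne_top.mpr hx)
  exact coeff_orderTop_ne hm.symm (H m (WithTop.coe_le_coe.mp (hm ▸ hle)))

theorem orderTop_one_sub [Zero Γ] [AddGroup R] [One R] [NeZero (1 : R)] {x : R⟦Γ⟧}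
    (hx : 0 < x.orderTop) : (1 - x).orderTop = 0 := by
  rw [orderTop_sub (by rwa [orderTop_one]), orderTop_one]

variable [AddCommGroup Γ] [IsOrderedAddMonoid Γ]

theorem orderTop_C_nonneg [NonAssocSemiring R] (r : R) : 0 ≤ (C r : R⟦Γ⟧).orderTop :=
  orderTop_single_le

theorem orderTop_inv_of_orderTop_eq_zero [Field R] {u : R⟦Γ⟧} (hu : u.orderTop = 0) :
    u⁻¹.orderTop = 0 := by
  have hu0 : u ≠ 0 := by rintro rfl; simp at hu
  simpa [hu] using congrArg orderTop (mul_inv_cancel₀ hu0)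

end HahnSeries

open HahnSeries

/-- in k((t)) = HahnSeries ℤ k, if b and a·bⁿ lie in the maximal ideal, then
    for every β ∈ k: res(a/(1 − b·C β)) = Σ_{i=0}^{n−1} res(a·bⁱ)·βⁱ. -/
theorem stmt_10 {k : Type*} [Field k] (a b : HahnSeries ℤ k)
    (hb : ∀ q : ℤ, q ≤ 0 → b.coeff q = 0) (n : ℕ)
    (hab : ∀ q : ℤ, q ≤ 0 → (a * b ^ n).coeff q = 0) (β : k) :
    (a * (1 - b * HahnSeries.C β)⁻¹).coeff 0 =
      ∑ i ∈ Finset.range n, (a * b ^ i).coeff 0 * β ^ i := by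
  set x := b * C β
  have hx : 0 < x.orderTop := by
    rw [orderTop_mul]
    exact add_pos_of_pos_of_nonneg (lt_orderTop_iff_forall_le.mpr hb) (orderTop_C_nonneg β)
  have hx1 : x ≠ 1 := fun h => by simp [h, orderTop_one] at hx
  have hrem : 0 < (a * x ^ n * (1 - x)⁻¹).orderTop := by
    have hax : a * x ^ n = a * b ^ n * C (β ^ n) := by rw [mul_pow, map_pow, mul_assoc]
    rw [hax, orderTop_mul, orderTop_mul, orderTop_inv_of_orderTop_eq_zero (orderTop_one_sub hx),
      add_zero]
    exact add_pos_of_pos_of_nonneg (lt_orderTop_iff_forall_le.mpr hab) (orderTop_C_nonneg _)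
  rw [inv_one_sub_eq_geom_sum_add hx1 n, mul_add, ← mul_assoc, coeff_add,
    lt_orderTop_iff_forall_le.mp hrem 0 le_rfl, add_zero, mul_sum, coeff_sum]
  refine sum_congr rfl fun i _ => ?_
  rw [mul_pow, ← map_pow, ← mul_assoc, C_apply, coeff_mul_single_zero]
end

section
/- Let k be a field and k((t)) the Laurent series field (HahnSeries ℤ k). Let a, b ∈ k((t)) with b.coeff q = 0 for all q ≤ 0 (i.e. b lies in the maximal ideal). Then the set S_{a,b} = { β ∈ k : res( a · (1 − b·C β)⁻¹ ) = 0 } is either finite or equal to all of k, where res(z) = z.coeff 0 and C : k → k((t)) is the constant embedding. -/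
/-!
Since `b` lies in the maximal ideal, `(1 - β b)⁻¹ = ∑ₙ βⁿ bⁿ`, so the residue of
`a (1 - β b)⁻¹` is `∑ₙ res(a bⁿ) βⁿ`. Only finitely many `res(a bⁿ)` are nonzero (the powers
of `b` form a summable family), so this residue is a polynomial function of `β`: its zero set
is finite unless the polynomial vanishes.
-/

open Polynomial

namespace HahnSeries

section CommRing

variable {Γ R : Type*} [AddCommMonoid Γ] [LinearOrder Γ] [IsOrderedCancelAddMonoid Γ]
  [CommRing R]

theorem hasFiniteSupport_coeff_mul_pow {y : R⟦Γ⟧} (hy : 0 < y.orderTop) (x : R⟦Γ⟧) (g : Γ) :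
    Function.HasFiniteSupport fun n : ℕ => (x * y ^ n).coeff g := by
  simpa [of_symm_smul_of_eq_mul, hy] using (x • SummableFamily.powers y).finite_co_support g

end CommRing

section Field

variable {Γ R : Type*} [AddCommGroup Γ] [LinearOrder Γ] [IsOrderedAddMonoid Γ] [Field R]

theorem coeff_mul_inv_one_sub {y : R⟦Γ⟧} (hy : 0 < y.orderTop) (x : R⟦Γ⟧) (g : Γ) :
    (x * (1 - y)⁻¹).coeff g = ∑ᶠ n : ℕ, (x * y ^ n).coeff g := by
  rw [← eq_inv_of_mul_eq_one_right (SummableFamily.one_sub_self_mul_hsum_powers hy),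
    ← SummableFamily.hsum_smul, SummableFamily.coeff_hsum]
  simp [of_symm_smul_of_eq_mul, hy]

theorem exists_polynomial_coeff_mul_inv_one_sub_smul {y : R⟦Γ⟧} (hy : 0 < y.orderTop)
    (x : R⟦Γ⟧) (g : Γ) : ∃ p : R[X], ∀ r : R, (x * (1 - r • y)⁻¹).coeff g = p.eval r := by
  have hfin := hasFiniteSupport_coeff_mul_pow hy x g
  refine ⟨∑ n ∈ hfin.toFinset, monomial n ((x * y ^ n).coeff g), fun r => ?_⟩
  have hry : 0 < (r • y).orderTop := hy.trans_le (orderTop_le_orderTop_smul r y)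
  rw [coeff_mul_inv_one_sub hry, eval_finsetSum]
  simp only [eval_monomial, _root_.smul_pow, mul_smul_comm, coeff_smul, smul_eq_mul]
  rw [finsum_eq_sum_of_support_subset _ (s := hfin.toFinset)]
  · exact Finset.sum_congr rfl fun n _ => mul_comm _ _
  · intro n hn
    exact hfin.mem_toFinset.2 (right_ne_zero_of_mul hn)

end Field

end HahnSeries

theorem Polynomial.finite_setOf_eval_eq_zero_or_eq_univ {R : Type*} [CommRing R] [IsDomain R]
    (p : R[X]) : {x | p.eval x = 0}.Finite ∨ {x | p.eval x = 0} = Set.univ := by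
  rcases eq_or_ne p 0 with rfl | hp
  · exact Or.inr (by simp)
  · exact Or.inl (finite_setOfPred_isRoot hp)

open HahnSeries

/-- in k((t)) = HahnSeries ℤ k, if b lies in the maximal ideal, then the set
    S_{a,b} = {β ∈ k : res(a/(1 − b·C β)) = 0} is either finite or all of k. -/
theorem stmt_11 {k : Type*} [Field k] (a b : HahnSeries ℤ k)
    (hb : ∀ q : ℤ, q ≤ 0 → b.coeff q = 0) :
    {β : k | (a * (1 - b * HahnSeries.C β)⁻¹).coeff 0 = 0}.Finite ∨
      {β : k | (a * (1 - b * HahnSeries.C β)⁻¹).coeff 0 = 0} = Set.univ := by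
  have hb_pos : 0 < b.orderTop := by
    refine zero_lt_one.trans_le (le_orderTop_iff_forall.mpr fun q hq => hb q ?_)
    exact Int.lt_add_one_iff.mp (WithTop.coe_lt_coe.mp hq)
  obtain ⟨p, hp⟩ := exists_polynomial_coeff_mul_inv_one_sub_smul hb_pos a 0
  have hset : {β : k | (a * (1 - b * HahnSeries.C β)⁻¹).coeff 0 = 0} = {β | p.eval β = 0} := by
    ext β
    rw [Set.mem_ofPred_eq, mul_comm b, C_mul_eq_smul, hp]
    rfl
  rw [hset]
  exact p.finite_setOf_eval_eq_zero_or_eq_univ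
end

section
/- Let K be a field with a valuation v taking values in a linearly ordered commutative group with zero, and let k ⊆ K be a subfield contained in the valuation ring. Let res : K → K be a function with res(K) ⊆ k which is additive, satisfies res(αx) = α·res(x) for all α ∈ k and x ∈ K, satisfies res(x) = 0 whenever v(x) < 1, and satisfies res(α) = α for all α ∈ k. Let a ∈ K with 0 < v(a) < 1, let n ∈ ℕ, and suppose res(a^{−m}) = 0 for all m with 1 ≤ m ≤ n. Then for every β ∈ k: res( a⁻ⁿ · (1 − aβ)⁻¹ ) = βⁿ. In particular, if moreover res(a⁻ⁿ·(1 − aβ)⁻¹) = 0, then β = 0. -/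
/-!
Expanding `a⁻ⁿ (1 - aβ)⁻¹` gives `a⁻ⁿ (1 - aβ)⁻¹ = a⁻ⁿ + β · a⁻⁽ⁿ⁻¹⁾ (1 - aβ)⁻¹`. The residue kills
`a⁻ⁿ` by hypothesis and is `k`-linear, so the residue picks up one factor `β` per step, down to
`res ((1 - aβ)⁻¹) = 1`, which holds because `(1 - aβ)⁻¹ = 1 + aβ (1 - aβ)⁻¹` with the second
summand in the maximal ideal.
-/

lemma inv_pow_succ_mul_inv_one_sub {K : Type*} [Field K] {a b : K} (ha : a ≠ 0)
    (hab : 1 - a * b ≠ 0) (n : ℕ) :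
    a⁻¹ ^ (n + 1) * (1 - a * b)⁻¹ = a⁻¹ ^ (n + 1) + b * (a⁻¹ ^ n * (1 - a * b)⁻¹) := by
  field_simp
  linear_combination (a⁻¹ ^ n * b) * mul_inv_cancel₀ ha

lemma inv_one_sub_eq_one_add {K : Type*} [Field K] {x : K} (hx : 1 - x ≠ 0) :
    (1 - x)⁻¹ = 1 + x * (1 - x)⁻¹ := by
  field_simp
  ring

namespace Valuation

variable {K : Type*} [Field K] {Γ₀ : Type*} [LinearOrderedCommGroupWithZero Γ₀]
  (v : Valuation K Γ₀)

lemma one_sub_ne_zero_of_lt_one {x : K} (hx : v x < 1) : 1 - x ≠ 0 := by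
  intro h
  simpa [h] using v.map_one_sub_of_lt hx

lemma map_mul_inv_one_sub_of_lt {x : K} (hx : v x < 1) : v (x * (1 - x)⁻¹) = v x := by
  rw [map_mul, map_inv₀, v.map_one_sub_of_lt hx, inv_one, mul_one]

lemma apply_inv_one_sub_eq_one (res : K → K) (hres_add : ∀ x y : K, res (x + y) = res x + res y)
    (hres_m : ∀ x : K, v x < 1 → res x = 0) (hres_one : res 1 = 1) {x : K} (hx : v x < 1) :
    res (1 - x)⁻¹ = 1 := by
  rw [inv_one_sub_eq_one_add (v.one_sub_ne_zero_of_lt_one hx), hres_add, hres_one,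
    hres_m _ ((v.map_mul_inv_one_sub_of_lt hx).trans_lt hx), add_zero]

end Valuation

lemma apply_inv_pow_mul_inv_one_sub {K : Type*} [Field K] (res : K → K)
    (hres_add : ∀ x y : K, res (x + y) = res x + res y) {a b : K} (ha : a ≠ 0)
    (hab : 1 - a * b ≠ 0) (hres_smul : ∀ x : K, res (b * x) = b * res x)
    (hres_inv : res (1 - a * b)⁻¹ = 1) :
    ∀ n : ℕ, (∀ m : ℕ, 1 ≤ m → m ≤ n → res (a⁻¹ ^ m) = 0) →
      res (a⁻¹ ^ n * (1 - a * b)⁻¹) = b ^ n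
  | 0, _ => by rw [pow_zero, one_mul, hres_inv, pow_zero]
  | n + 1, hres_a => by
    rw [inv_pow_succ_mul_inv_one_sub ha hab, hres_add, hres_a (n + 1) le_add_self le_rfl,
      hres_smul, apply_inv_pow_mul_inv_one_sub res hres_add ha hab hres_smul hres_inv n
        fun m h1 h2 => hres_a m h1 (h2.trans n.le_succ), zero_add, pow_succ, mul_comm]

theorem stmt_13_general {K : Type*} [Field K] {Γ₀ : Type*} [LinearOrderedCommGroupWithZero Γ₀]
    (v : Valuation K Γ₀) (k : Subfield K) (hkO : ∀ x ∈ k, v x ≤ 1)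
    (res : K → K)
    (hres_add : ∀ x y : K, res (x + y) = res x + res y)
    (hres_smul : ∀ α ∈ k, ∀ x : K, res (α * x) = α * res x)
    (hres_m : ∀ x : K, v x < 1 → res x = 0)
    (hres_id : ∀ α ∈ k, res α = α)
    (a : K) (ha0 : 0 < v a) (ha1 : v a < 1)
    (n : ℕ) (hres_a : ∀ m : ℕ, 1 ≤ m → m ≤ n → res (a⁻¹ ^ m) = 0) :
    ∀ β ∈ k, res (a⁻¹ ^ n * (1 - a * β)⁻¹) = β ^ n ∧
      (res (a⁻¹ ^ n * (1 - a * β)⁻¹) = 0 → β = 0) := by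
  intro β hβ
  have haβ : v (a * β) < 1 := by
    rw [map_mul]
    exact mul_lt_one_of_lt_of_le ha1 (hkO β hβ)
  have hres : res (a⁻¹ ^ n * (1 - a * β)⁻¹) = β ^ n :=
    apply_inv_pow_mul_inv_one_sub res hres_add (v.ne_zero_iff.mp ha0.ne')
      (v.one_sub_ne_zero_of_lt_one haβ) (hres_smul β hβ)
      (v.apply_inv_one_sub_eq_one res hres_add hres_m (hres_id 1 k.one_mem) haβ) n hres_a
  exact ⟨hres, fun h0 => pow_eq_zero_iff'.mp (hres ▸ h0) |>.1⟩

/-- for a total residue map res with res(a⁻ᵐ) = 0 for 1 ≤ m ≤ n, one has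
    res(a⁻ⁿ/(1 − aβ)) = βⁿ for every β ∈ k; in particular if res(a⁻ⁿ/(1 − aβ)) = 0 then β = 0. -/
theorem stmt_13 {K : Type*} [Field K] {Γ₀ : Type*} [LinearOrderedCommGroupWithZero Γ₀]
    (v : Valuation K Γ₀) (k : Subfield K) (hkO : ∀ x ∈ k, v x ≤ 1)
    (res : K → K) (hres_mem : ∀ x : K, res x ∈ k)
    (hres_add : ∀ x y : K, res (x + y) = res x + res y)
    (hres_smul : ∀ α ∈ k, ∀ x : K, res (α * x) = α * res x)
    (hres_m : ∀ x : K, v x < 1 → res x = 0)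
    (hres_id : ∀ α ∈ k, res α = α)
    (a : K) (ha0 : 0 < v a) (ha1 : v a < 1)
    (n : ℕ) (hres_a : ∀ m : ℕ, 1 ≤ m → m ≤ n → res (a⁻¹ ^ m) = 0) :
    ∀ β ∈ k, res (a⁻¹ ^ n * (1 - a * β)⁻¹) = β ^ n ∧
      (res (a⁻¹ ^ n * (1 - a * β)⁻¹) = 0 → β = 0) :=
  stmt_13_general v k hkO res hres_add hres_smul hres_m hres_id a ha0 ha1 n hres_a
end
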